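/- Compatible function approximation for the intra-option path manifold. If η̃ ∈ ℝⁿ is a critical point of the squared error η ↦ ε(η) (i.e., the gradient of ε vanishes at η̃), then G_θ η̃ = g, where g ∈ ℝⁿ is the intra-option policy gradient vector g_i = ∑_{s,o} μ(s,o) ∑_a ∂_i π(o,s,θ,a) · q_U(s,o,a). In particular, if the matrix G_θ is invertible, then η̃ = G_θ^{-1} g; that is, the minimizer of the compatible-approximation error equals the natural gradient of the expected discounted return with respect to the intra-option policy parameters. -/

import Mathlib

/-- Partial derivative of `f : ℝⁿ → ℝ` with respect to the `i`-th coordinate of `θ`. -/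
noncomputable def pd {n : ℕ} (i : Fin n) (f : (Fin n → ℝ) → ℝ) (θ : Fin n → ℝ) : ℝ :=
  fderiv ℝ f θ (Pi.single i 1)

/-!
`ε` is a weighted least-squares objective in `η` with feature vectors `∇_θ ln π`, so a
critical point solves the normal equations `G_θ η = ∑ μ π a_U ∇_θ ln π`. Since
`π ∇_θ ln π = ∇_θ π` and `∑_a ∇_θ π = ∇_θ 1 = 0`, the baseline `q_O` in `a_U = q_U - q_O`
drops out of the right-hand side, which is therefore the policy gradient `g`.
-/

open scoped Matrix

section LeastSquares

variable {ι : Type*} [Fintype ι] {n : ℕ}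

def weightedSqError (w y : ι → ℝ) (φ : ι → Fin n → ℝ) (η : Fin n → ℝ) : ℝ :=
  ∑ k, w k * (η ⬝ᵥ φ k - y k) ^ 2

def weightedGram (w : ι → ℝ) (φ : ι → Fin n → ℝ) : Matrix (Fin n) (Fin n) ℝ :=
  Matrix.of fun i j => ∑ k, w k * φ k i * φ k j

theorem hasFDerivAt_dotProduct_left (v η : Fin n → ℝ) :
    HasFDerivAt (fun η => η ⬝ᵥ v)
      (∑ i, v i • ContinuousLinearMap.proj (R := ℝ) (φ := fun _ : Fin n => ℝ) i) η :=
  HasFDerivAt.fun_sum fun i _ => (hasFDerivAt_apply i η).mul_const (v i)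

theorem fderiv_weightedSqError_apply_single (w y : ι → ℝ) (φ : ι → Fin n → ℝ)
    (η : Fin n → ℝ) (j : Fin n) :
    fderiv ℝ (weightedSqError w y φ) η (Pi.single j 1)
      = 2 * ∑ k, w k * (η ⬝ᵥ φ k - y k) * φ k j := by
  have hderiv := HasFDerivAt.fun_sum (u := Finset.univ) fun k _ =>
    (((hasFDerivAt_dotProduct_left (φ k) η).sub_const (y k)).pow 2).const_mul (w k)
  unfold weightedSqError
  rw [hderiv.fderiv]
  simp only [Nat.add_one_sub_one, pow_one, nsmul_eq_mul, Nat.cast_ofNat, sum_apply, smul_apply,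
    ContinuousLinearMap.proj_apply, Pi.single_apply, smul_eq_mul, mul_ite, mul_one, mul_zero,
    Finset.sum_ite_eq', Finset.mem_univ, ↓reduceIte, Finset.mul_sum]
  exact Finset.sum_congr rfl fun k _ => by ring

theorem weightedGram_mulVec (w : ι → ℝ) (φ : ι → Fin n → ℝ) (η : Fin n → ℝ) :
    weightedGram w φ *ᵥ η = fun j => ∑ k, w k * (η ⬝ᵥ φ k) * φ k j := by
  funext j
  simp only [weightedGram, Matrix.mulVec, dotProduct, Matrix.of_apply, Finset.sum_mul,
    Finset.mul_sum]
  rw [Finset.sum_comm]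
  exact Finset.sum_congr rfl fun k _ => Finset.sum_congr rfl fun i _ => by ring

theorem weightedGram_mulVec_eq_of_fderiv_weightedSqError_eq_zero {w y : ι → ℝ}
    {φ : ι → Fin n → ℝ} {η : Fin n → ℝ} (hcrit : fderiv ℝ (weightedSqError w y φ) η = 0) :
    weightedGram w φ *ᵥ η = fun j => ∑ k, w k * y k * φ k j := by
  funext j
  have hj := fderiv_weightedSqError_apply_single w y φ η j
  rw [hcrit] at hj
  simp only [zero_apply, mul_sub, sub_mul, Finset.sum_sub_distrib] at hj
  rw [weightedGram_mulVec]
  linarith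

end LeastSquares

section LogDerivative

variable {n : ℕ} {θ : Fin n → ℝ}

theorem mul_pd_log {f : (Fin n → ℝ) → ℝ} (hf : DifferentiableAt ℝ f θ) (hf0 : f θ ≠ 0)
    (i : Fin n) : f θ * pd i (fun θ' => Real.log (f θ')) θ = pd i f θ := by
  simp only [pd, (hf.hasFDerivAt.log hf0).fderiv, smul_apply, smul_eq_mul,
    mul_inv_cancel_left₀ hf0]

variable {A : Type*} [Fintype A] {p : A → (Fin n → ℝ) → ℝ} {c : ℝ}

theorem sum_pd_eq_zero_of_sum_eq_const (hsum : ∀ θ', ∑ a, p a θ' = c)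
    (hp : ∀ a, DifferentiableAt ℝ (p a) θ) (i : Fin n) : ∑ a, pd i (p a) θ = 0 := by
  have hfderiv := fderiv_fun_sum (u := Finset.univ) (x := θ) fun a _ => hp a
  rw [funext hsum, fderiv_const_apply] at hfderiv
  simp only [pd, ← sum_apply, ← hfderiv, zero_apply]

theorem sum_mul_sub_mul_pd_log (hsum : ∀ θ', ∑ a, p a θ' = c)
    (hp : ∀ a, DifferentiableAt ℝ (p a) θ) (hp0 : ∀ a, p a θ ≠ 0) (q : A → ℝ) (b : ℝ)
    (i : Fin n) :
    ∑ a, p a θ * (q a - b) * pd i (fun θ' => Real.log (p a θ')) θ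
      = ∑ a, pd i (p a) θ * q a := by
  calc ∑ a, p a θ * (q a - b) * pd i (fun θ' => Real.log (p a θ')) θ
      = ∑ a, pd i (p a) θ * q a - b * ∑ a, pd i (p a) θ := by
        rw [Finset.mul_sum, ← Finset.sum_sub_distrib]
        refine Finset.sum_congr rfl fun a _ => ?_
        rw [← mul_pd_log (hp a) (hp0 a)]
        ring
    _ = ∑ a, pd i (p a) θ * q a := by
        rw [sum_pd_eq_zero_of_sum_eq_const hsum hp, mul_zero, sub_zero]

end LogDerivative

theorem compatible_function_approximation_intra_option_general
    {S O A : Type*} [Fintype S] [Fintype O] [Fintype A] {n : ℕ}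
    (π : O → S → (Fin n → ℝ) → A → ℝ) (θ : Fin n → ℝ)
    (hπpos : ∀ o s θ' a, 0 < π o s θ' a)
    (hπsum : ∀ o s θ', ∑ a, π o s θ' a = 1)
    (hπdiff : ∀ o s a, ContDiff ℝ 1 (fun θ' => π o s θ' a))
    (μ : S × O → ℝ)
    (qU : S → O → A → ℝ)
    (qO : S → O → ℝ)
    (aU : S → O → A → ℝ) (haU : ∀ s o a, aU s o a = qU s o a - qO s o)
    (f : (Fin n → ℝ) → S → O → A → ℝ)
    (hf : ∀ η s o a, f η s o a = ∑ i, η i * pd i (fun θ' => Real.log (π o s θ' a)) θ)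
    (ε : (Fin n → ℝ) → ℝ)
    (hε : ∀ η, ε η = ∑ s, ∑ o, ∑ a,
        μ (s, o) * π o s θ a * (f η s o a - aU s o a) ^ 2)
    (G : Matrix (Fin n) (Fin n) ℝ)
    (hG : ∀ i j, G i j = ∑ s, ∑ o, ∑ a, μ (s, o) * π o s θ a
        * pd i (fun θ' => Real.log (π o s θ' a)) θ
        * pd j (fun θ' => Real.log (π o s θ' a)) θ)
    (g : Fin n → ℝ)
    (hg : ∀ i, g i = ∑ s, ∑ o, μ (s, o) * ∑ a, pd i (fun θ' => π o s θ' a) θ * qU s o a)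
    (ηt : Fin n → ℝ) (hcrit : fderiv ℝ ε ηt = 0) :
    G.mulVec ηt = g ∧ (IsUnit G → ηt = G⁻¹.mulVec g) := by
  set w : S × O × A → ℝ := fun k => μ (k.1, k.2.1) * π k.2.1 k.1 θ k.2.2
  set y : S × O × A → ℝ := fun k => aU k.1 k.2.1 k.2.2
  set φ : S × O × A → Fin n → ℝ := fun k i => pd i (fun θ' => Real.log (π k.2.1 k.1 θ' k.2.2)) θ
  have hε' : ε = weightedSqError w y φ := by
    funext η
    simp only [weightedSqError, hε, hf, dotProduct, Fintype.sum_prod_type, w, y, φ]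
  have hG' : G = weightedGram w φ := by
    ext i j
    simp only [weightedGram, hG, Fintype.sum_prod_type, Matrix.of_apply, w, φ]
  have hg' : g = fun j => ∑ k, w k * y k * φ k j := by
    funext j
    simp only [hg, Fintype.sum_prod_type, w, y, φ]
    refine Finset.sum_congr rfl fun s _ => Finset.sum_congr rfl fun o _ => ?_
    rw [← sum_mul_sub_mul_pd_log (hπsum o s) (fun a => (hπdiff o s a).differentiable one_ne_zero θ)
      (fun a => (hπpos o s θ a).ne') (qU s o) (qO s o), Finset.mul_sum]
    exact Finset.sum_congr rfl fun a _ => by rw [haU]; ring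
  have hnormal : G *ᵥ ηt = g := by
    rw [hG', hg']
    exact weightedGram_mulVec_eq_of_fderiv_weightedSqError_eq_zero (hε' ▸ hcrit)
  refine ⟨hnormal, fun hunit => ?_⟩
  let := hunit.invertible
  exact (Matrix.inv_mulVec_eq_vec hnormal.symm).symm

/-- Compatible function approximation for the intra-option path manifold.
If `η̃` is a critical point of the squared compatible-approximation error `ε`, then
`G_θ η̃ = g`, where `g` is the intra-option policy gradient vector
`g_i = ∑_{s,o} μ(s,o) ∑_a ∂_i π(o,s,θ,a) q_U(s,o,a)`; in particular if `G_θ` is invertible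
then `η̃ = G_θ⁻¹ g`, the natural gradient. -/
theorem compatible_function_approximation_intra_option
    {S O A : Type*} [Fintype S] [Fintype O] [Fintype A]
    [Nonempty S] [Nonempty O] [Nonempty A] {n : ℕ}
    (π : O → S → (Fin n → ℝ) → A → ℝ) (θ : Fin n → ℝ)
    (hπpos : ∀ o s θ' a, 0 < π o s θ' a)
    (hπsum : ∀ o s θ', ∑ a, π o s θ' a = 1)
    (hπdiff : ∀ o s a, ContDiff ℝ 1 (fun θ' => π o s θ' a))
    (μ : S × O → ℝ) (hμ : ∀ p, 0 ≤ μ p)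
    (qU : S → O → A → ℝ)
    (qO : S → O → ℝ) (hqO : ∀ s o, qO s o = ∑ a, π o s θ a * qU s o a)
    (aU : S → O → A → ℝ) (haU : ∀ s o a, aU s o a = qU s o a - qO s o)
    (f : (Fin n → ℝ) → S → O → A → ℝ)
    (hf : ∀ η s o a, f η s o a = ∑ i, η i * pd i (fun θ' => Real.log (π o s θ' a)) θ)
    (ε : (Fin n → ℝ) → ℝ)
    (hε : ∀ η, ε η = ∑ s, ∑ o, ∑ a,
        μ (s, o) * π o s θ a * (f η s o a - aU s o a) ^ 2)
    (G : Matrix (Fin n) (Fin n) ℝ)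
    (hG : ∀ i j, G i j = ∑ s, ∑ o, ∑ a, μ (s, o) * π o s θ a
        * pd i (fun θ' => Real.log (π o s θ' a)) θ
        * pd j (fun θ' => Real.log (π o s θ' a)) θ)
    (g : Fin n → ℝ)
    (hg : ∀ i, g i = ∑ s, ∑ o, μ (s, o) * ∑ a, pd i (fun θ' => π o s θ' a) θ * qU s o a)
    (ηt : Fin n → ℝ) (hcrit : fderiv ℝ ε ηt = 0) :
    G.mulVec ηt = g ∧ (IsUnit G → ηt = G⁻¹.mulVec g) :=
  compatible_function_approximation_intra_option_general π θ hπpos hπsum hπdiff μ qU qO aU haU f hf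
    ε hε G hG g hg ηt hcrit
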